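/- Let H be a real N×p matrix, y ∈ ℝ^N, and suppose the sequence (s^{(q)}) in ℝ^p is generated so that each s^{(q)} is r-sparse and each step uses a step size 0 < μ^{(q)} ≤ 1/ρ_H² with s^{(q+1)} = 𝒯_r(s^{(q)} + μ^{(q)} Hᵀ(y - H s^{(q)})). Then the sequence of residuals (‖y - H s^{(q)}‖₂²) is monotonically non-increasing and converges. -/

import Mathlib

open Matrix Finset Filter

/-- Squared Euclidean norm of a vector. -/
def sqNorm {n : Type*} [Fintype n] (v : n → ℝ) : ℝ := ∑ i, (v i)^2

/-- Spectral norm (largest singular value) of a real matrix,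
as the operator 2-norm of the associated Euclidean linear map. -/
noncomputable def specNorm {m n : Type*} [Fintype m] [Fintype n] [DecidableEq n]
    (H : Matrix m n ℝ) : ℝ :=
  ‖LinearMap.toContinuousLinearMap (Matrix.toEuclideanLin H)‖

/-- Number of nonzero entries (ℓ₀ "norm") of a vector. -/
noncomputable def l0 {n : Type*} [Fintype n] (v : n → ℝ) : ℕ :=
  (Set.toFinite (Function.support v)).toFinset.card

/-- `w` is a hard-thresholding of `v` at sparsity level `r`: `w` agrees with `v`
on a set `S` of `min r p` indices of largest magnitude and is zero elsewhere. -/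
def IsHardThreshold {n : Type*} [Fintype n] (r : ℕ) (v w : n → ℝ) : Prop :=
  ∃ S : Finset n, S.card = min r (Fintype.card n) ∧ (∀ i ∈ S, w i = v i) ∧
    (∀ i ∉ S, w i = 0) ∧ ∀ i ∈ S, ∀ j ∉ S, |v j| ≤ |v i|

/-! Hard thresholding returns a best `r`-sparse approximation, and `s⁽q⁾` is itself `r`-sparse, so
`s⁽q⁺¹⁾` is at least as close to the gradient step `s⁽q⁾ + μ g` (with `g = Hᵀ(y - H s⁽q⁾)`) as
`s⁽q⁾` is. Writing `Δ = s⁽q⁺¹⁾ - s⁽q⁾`, this gives `‖Δ‖² ≤ 2μ⟨g, Δ⟩`, while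
`‖y - H s⁽q⁺¹⁾‖² = ‖y - H s⁽q⁾‖² - 2⟨g, Δ⟩ + ‖HΔ‖²` and `‖HΔ‖² ≤ ρ_H²‖Δ‖² ≤ ‖Δ‖²/μ`.
So the residuals decrease, and being nonnegative they converge. -/

theorem Finset.sum_le_sum_of_card_le_of_forall_le {ι M : Type*} [AddCommMonoid M] [LinearOrder M]
    [IsOrderedAddMonoid M] {f : ι → M} {S T : Finset ι} (hcard : #T ≤ #S)
    (hf : ∀ i ∈ S, 0 ≤ f i) (hle : ∀ i ∈ S, ∀ j ∉ S, f j ≤ f i) :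
    ∑ j ∈ T, f j ≤ ∑ i ∈ S, f i := by
  classical
  rw [← sum_inter_add_sum_sdiff T S, ← sum_inter_add_sum_sdiff S T, inter_comm]
  gcongr 1
  have hsdiff : #(T \ S) ≤ #(S \ T) := card_sdiff_le_card_sdiff_iff.2 hcard
  rcases (S \ T).eq_empty_or_nonempty with hST | hST
  · rw [hST, card_empty, Nat.le_zero, card_eq_zero] at hsdiff
    simp [hsdiff, hST]
  obtain ⟨i₀, hi₀, hmin⟩ := exists_min_image (S \ T) f hST
  calc ∑ j ∈ T \ S, f j
      ≤ #(T \ S) • f i₀ :=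
        sum_le_card_nsmul _ _ _ fun j hj => hle i₀ (mem_sdiff.1 hi₀).1 j (mem_sdiff.1 hj).2
    _ ≤ #(S \ T) • f i₀ := nsmul_le_nsmul_left (hf i₀ (mem_sdiff.1 hi₀).1) hsdiff
    _ ≤ ∑ i ∈ S \ T, f i := card_nsmul_le_sum _ _ _ hmin

section sqNorm

variable {n : Type*} [Fintype n]

lemma sqNorm_eq_dotProduct (v : n → ℝ) : sqNorm v = v ⬝ᵥ v := by
  simp [sqNorm, dotProduct, sq]

lemma sqNorm_nonneg (v : n → ℝ) : 0 ≤ sqNorm v :=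
  sum_nonneg fun _ _ => sq_nonneg _

lemma sqNorm_sub (a b : n → ℝ) : sqNorm (a - b) = sqNorm a - 2 * (a ⬝ᵥ b) + sqNorm b := by
  simp only [sqNorm_eq_dotProduct, sub_dotProduct, dotProduct_sub, dotProduct_comm b a]
  ring

lemma sqNorm_eq_norm_sq (v : n → ℝ) : sqNorm v = ‖WithLp.toLp 2 v‖ ^ 2 := by
  rw [EuclideanSpace.norm_eq, Real.sq_sqrt (by positivity)]
  simp [sqNorm]

lemma sqNorm_sub_eq_sum_compl [DecidableEq n] {v w : n → ℝ} {S : Finset n}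
    (hw : ∀ i ∈ S, w i = v i) (hw₀ : ∀ i ∉ S, w i = 0) :
    sqNorm (v - w) = ∑ i ∈ Sᶜ, v i ^ 2 := by
  rw [sqNorm, ← sum_compl_add_sum S, sum_eq_zero (s := S) fun i hi => by simp [hw i hi], add_zero]
  exact sum_congr rfl fun i hi => by simp [hw₀ i (mem_compl.1 hi)]

lemma sum_compl_sq_le_sqNorm_sub [DecidableEq n] {v x : n → ℝ} {T : Finset n}
    (hx : ∀ i ∉ T, x i = 0) :
    ∑ i ∈ Tᶜ, v i ^ 2 ≤ sqNorm (v - x) := by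
  rw [sqNorm, ← sum_compl_add_sum T]
  refine le_add_of_le_of_nonneg (le_of_eq (sum_congr rfl fun i hi => ?_))
    (sum_nonneg fun _ _ => sq_nonneg _)
  simp [hx i (mem_compl.1 hi)]

end sqNorm

lemma sqNorm_mulVec_le {m n : Type*} [Fintype m] [Fintype n] [DecidableEq n]
    (H : Matrix m n ℝ) (x : n → ℝ) :
    sqNorm (H *ᵥ x) ≤ specNorm H ^ 2 * sqNorm x := by
  rw [sqNorm_eq_norm_sq, sqNorm_eq_norm_sq, specNorm, ← mul_pow]
  gcongr
  exact (LinearMap.toContinuousLinearMap (Matrix.toEuclideanLin H)).le_opNorm (WithLp.toLp 2 x)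

lemma IsHardThreshold.sqNorm_sub_le {n : Type*} [Fintype n] [DecidableEq n] {r : ℕ}
    {v w x : n → ℝ} (h : IsHardThreshold r v w) (hx : l0 x ≤ r) :
    sqNorm (v - w) ≤ sqNorm (v - x) := by
  obtain ⟨S, hScard, hw, hw₀, hmax⟩ := h
  set T := (Set.toFinite (Function.support x)).toFinset
  have hxT : ∀ i ∉ T, x i = 0 := by simp [T]
  have hTS : #T ≤ #S := hScard ▸ le_min hx (card_le_univ T)
  have hsum : ∑ i ∈ T, v i ^ 2 ≤ ∑ i ∈ S, v i ^ 2 :=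
    sum_le_sum_of_card_le_of_forall_le hTS (fun _ _ => sq_nonneg _)
      fun i hi j hj => sq_le_sq.2 (hmax i hi j hj)
  have hS := sum_compl_add_sum S fun i => v i ^ 2
  have hT := sum_compl_add_sum T fun i => v i ^ 2
  rw [sqNorm_sub_eq_sum_compl hw hw₀]
  linarith [sum_compl_sq_le_sqNorm_sub (v := v) hxT]

lemma sqNorm_residual_le_of_closer_to_gradient_step {m n : Type*} [Fintype m] [Fintype n]
    [DecidableEq n]
    (H : Matrix m n ℝ) (y : m → ℝ) {s s' : n → ℝ} {μ : ℝ} (hμ : 0 < μ)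
    (hμH : μ * specNorm H ^ 2 ≤ 1)
    (hcloser : sqNorm (s + μ • Hᵀ *ᵥ (y - H *ᵥ s) - s') ≤
      sqNorm (s + μ • Hᵀ *ᵥ (y - H *ᵥ s) - s)) :
    sqNorm (y - H *ᵥ s') ≤ sqNorm (y - H *ᵥ s) := by
  obtain ⟨Δ, rfl⟩ : ∃ Δ, s' = s + Δ := ⟨s' - s, by abel⟩
  set e := y - H *ᵥ s
  set d := e ⬝ᵥ H *ᵥ Δ
  have hΔ : sqNorm Δ ≤ 2 * μ * d := by
    have hgΔ : Hᵀ *ᵥ e ⬝ᵥ Δ = d := by rw [mulVec_transpose, ← dotProduct_mulVec]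
    rw [add_sub_add_left_eq_sub, add_sub_cancel_left, sqNorm_sub, smul_dotProduct, hgΔ]
      at hcloser
    simp only [smul_eq_mul] at hcloser
    linarith
  have hres : sqNorm (y - H *ᵥ (s + Δ)) = sqNorm e - 2 * d + sqNorm (H *ᵥ Δ) := by
    rw [← sqNorm_sub, mulVec_add, sub_add_eq_sub_sub]
  have hHΔ : μ * sqNorm (H *ᵥ Δ) ≤ μ * (2 * d) :=
    calc μ * sqNorm (H *ᵥ Δ)
        ≤ μ * (specNorm H ^ 2 * sqNorm Δ) := by gcongr; exact sqNorm_mulVec_le H Δ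
      _ = (μ * specNorm H ^ 2) * sqNorm Δ := by ring
      _ ≤ 1 * sqNorm Δ := by gcongr; exact sqNorm_nonneg Δ
      _ ≤ μ * (2 * d) := by linarith
  linarith [le_of_mul_le_mul_left hHΔ hμ]

theorem stmt_14 {N p : ℕ} (H : Matrix (Fin N) (Fin p) ℝ) (y : Fin N → ℝ)
    (r : ℕ) (s : ℕ → (Fin p → ℝ)) (μ : ℕ → ℝ)
    (hsparse : ∀ q, l0 (s q) ≤ r)
    (hμ : ∀ q, 0 < μ q ∧ μ q ≤ 1 / (specNorm H)^2)
    (hstep : ∀ q, IsHardThreshold r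
      (s q + μ q • H.transpose.mulVec (y - H.mulVec (s q))) (s (q+1))) :
    Antitone (fun q => sqNorm (y - H.mulVec (s q))) ∧
    ∃ L : ℝ, Tendsto (fun q => sqNorm (y - H.mulVec (s q))) atTop (nhds L) := by
  have hanti : Antitone (fun q => sqNorm (y - H.mulVec (s q))) := by
    refine antitone_nat_of_succ_le fun q => ?_
    obtain ⟨hμpos, hμle⟩ := hμ q
    exact sqNorm_residual_le_of_closer_to_gradient_step H y hμpos
      (mul_le_of_le_div₀ zero_le_one (sq_nonneg _) hμle) ((hstep q).sqNorm_sub_le (hsparse q))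
  have hbdd : BddBelow (Set.range fun q => sqNorm (y - H.mulVec (s q))) :=
    ⟨0, Set.forall_mem_range.2 fun _ => sqNorm_nonneg _⟩
  exact ⟨hanti, _, tendsto_atTop_ciInf hanti hbdd⟩
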